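/- Under the error bound property with constants M = f* − d(x^0) and κ > 0, the last primal iterate of Algorithm (DG) with constant step size 1/L_d converges globally linearly: setting θ = κ²/(1+κ²), for all k ≥ 1, ‖u^k − u*‖ ≤ √(L_d R_d²/σ_f) · θ^{(k−1)/2}, dist_K(G u^k + g) ≤ L_d R_d · θ^{(k−1)/2}, and |f(u^k) − f*| ≤ (2 R_d + ‖x^0‖) · L_d R_d · θ^{(k−1)/2}. -/

import Mathlib

open scoped RealInnerProductSpace

/-!
The dual function `d` is concave with gradient `-(G (u x)) - g` and, by strong convexity of `f`,
`‖G‖ ^ 2 / σ_f`-smooth. Hence a step `x ↦ x⁺` of (DG) satisfies the three-point inequality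
`d y - d x⁺ ≤ L_d / 2 * (‖y - x‖ ^ 2 - ‖y - x⁺‖ ^ 2)` for `y ∈ K*`. With `y = x` it gives ascent;
with `y` the projection of `x` onto `X*` and the error bound it gives
`f* - d x⁺ ≤ κ ^ 2 * (d x⁺ - d x)`, so the dual gap contracts by `θ`, starting from
`L_d R_d ^ 2 / 2` after one step; with `y = [x⁰]_{X*}` it gives Fejér monotonicity.

The primal errors are controlled by the dual gap: strong convexity gives
`σ_f / 2 * ‖u x - u*‖ ^ 2 ≤ f* - d x`; the residual `G u^k + g` lies within
`L_d ‖x^{k+1} - x^k‖` of `K` because `x^{k+1} - (x^k + ∇d(x^k) / L_d)` lies in `K** = K`; and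
`|f(u^k) - f*|` is bounded by these two through the Lagrangian at `x^k` and at `[x⁰]_{X*}`.
-/

open Filter Topology Set

section StrongConvexity

variable {E : Type*} [NormedAddCommGroup E] [NormedSpace ℝ E]

theorem StrongConvexOn.subset {s t : Set E} {m : ℝ} {φ : E → ℝ} (hφ : StrongConvexOn t m φ)
    (hst : s ⊆ t) (hs : Convex ℝ s) : StrongConvexOn s m φ :=
  ⟨hs, fun _ hx _ hy => hφ.2 (hst hx) (hst hy)⟩

theorem StrongConvexOn.add_sq_le_of_isMinOn {s : Set E} {m : ℝ} {φ : E → ℝ}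
    (hφ : StrongConvexOn s m φ) {u w : E} (hu : u ∈ s) (hmin : IsMinOn φ s u) (hw : w ∈ s) :
    φ u + m / 2 * ‖w - u‖ ^ 2 ≤ φ w := by
  set c := m / 2 * ‖w - u‖ ^ 2
  have hsmall : ∀ t ∈ Ioo (0 : ℝ) 1, φ u + c ≤ φ w + t * c := by
    rintro t ⟨ht0, ht1⟩
    have hseg := hφ.1 hu hw (sub_nonneg.2 ht1.le) ht0.le (sub_add_cancel 1 t)
    have hconv : φ ((1 - t) • u + t • w) ≤ (1 - t) * φ u + t * φ w - (1 - t) * t * c := by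
      simpa [c, norm_sub_rev] using hφ.2 hu hw (sub_nonneg.2 ht1.le) ht0.le (sub_add_cancel 1 t)
    have hle := isMinOn_iff.1 hmin _ hseg
    have : t * (φ u + c) ≤ t * (φ w + t * c) := by linarith
    exact le_of_mul_le_mul_left this ht0
  have hlim : Tendsto (fun t => φ w + t * c) (𝓝[>] 0) (𝓝 (φ w)) :=
    tendsto_nhdsWithin_of_tendsto_nhds (Continuous.tendsto' (by fun_prop) 0 _ (by simp))
  exact ge_of_tendsto hlim (eventually_of_mem (Ioo_mem_nhdsGT one_pos) hsmall)

end StrongConvexity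

section ConicProjection

variable {F : Type*} [NormedAddCommGroup F] [InnerProductSpace ℝ F]

theorem inner_sub_le_zero_of_forall_norm_sub_le {K : Set F} (hK : Convex ℝ K) {z p : F}
    (hp : p ∈ K) (hmin : ∀ w ∈ K, ‖z - p‖ ≤ ‖z - w‖) {w : F} (hw : w ∈ K) :
    ⟪z - p, w - p⟫ ≤ 0 := by
  have : Nonempty K := ⟨⟨p, hp⟩⟩
  refine (norm_eq_iInf_iff_real_inner_le_zero hK hp).1 (le_antisymm ?_ ?_) w hw
  · exact le_ciInf fun w => hmin w w.2
  · exact ciInf_le ⟨0, by rintro _ ⟨w, rfl⟩; exact norm_nonneg _⟩ (⟨p, hp⟩ : K)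

theorem exists_properCone_coe_eq {K : Set F} (hne : K.Nonempty) (hcl : IsClosed K)
    (hcv : Convex ℝ K) (hcone : ∀ c : ℝ, 0 ≤ c → ∀ v ∈ K, c • v ∈ K) :
    ∃ C : ProperCone ℝ F, (C : Set F) = K := by
  have hzero : (0 : F) ∈ K := by simpa using hcone 0 le_rfl _ hne.some_mem
  refine ⟨⟨⟨⟨⟨K, fun {u v} hu hv => ?_⟩, hzero⟩, fun c v hv => hcone c c.2 v hv⟩, hcl⟩, rfl⟩
  -- `u + v` is twice the midpoint of `u` and `v`
  have hmid := hcone 2 zero_le_two _ (hcv hu hv (by norm_num) (by norm_num) (add_halves 1))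
  rwa [smul_add, smul_smul, smul_smul, mul_one_div_cancel two_ne_zero, one_smul, one_smul] at hmid

variable [CompleteSpace F]

theorem ProperCone.sub_mem_of_forall_norm_sub_le (C : ProperCone ℝ F) {z p : F}
    (hp : p ∈ ProperCone.innerDual (C : Set F))
    (hmin : ∀ w ∈ ProperCone.innerDual (C : Set F), ‖z - p‖ ≤ ‖z - w‖) : p - z ∈ C := by
  rw [← ProperCone.innerDual_innerDual C, ProperCone.mem_innerDual]
  intro q hq
  have h := inner_sub_le_zero_of_forall_norm_sub_le (ProperCone.innerDual _).convex hp hmin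
    (add_mem hp hq)
  rw [add_sub_cancel_left, real_inner_comm, ← neg_sub, inner_neg_right] at h
  linarith

theorem ProperCone.neg_inner_le_norm_mul_infDist (C : ProperCone ℝ F) {y : F}
    (hy : y ∈ ProperCone.innerDual (C : Set F)) (r : F) :
    -⟪y, r⟫ ≤ ‖y‖ * Metric.infDist r C := by
  rcases (norm_nonneg y).eq_or_lt with hy0 | hy0
  · simp [norm_eq_zero.1 hy0.symm]
  rw [← div_le_iff₀' hy0, Metric.le_infDist C.nonempty]
  intro v hv
  rw [div_le_iff₀' hy0, dist_eq_norm, norm_sub_rev]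
  have hyv : 0 ≤ ⟪y, v⟫ := real_inner_comm y v ▸ ProperCone.mem_innerDual.1 hy hv
  have := real_inner_le_norm y (v - r)
  rw [inner_sub_right] at this
  linarith

end ConicProjection

section ThreePoint

variable {F : Type*} [NormedAddCommGroup F]

def ThreePointIneq (d : F → ℝ) (T : F → F) (C : Set F) (L : ℝ) : Prop :=
  ∀ z ∈ C, ∀ y ∈ C, d y - d (T z) ≤ L / 2 * (‖y - z‖ ^ 2 - ‖y - T z‖ ^ 2)

namespace ThreePointIneq

variable {d : F → ℝ} {T : F → F} {C : Set F} {L : ℝ}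

theorem add_sq_le (h : ThreePointIneq d T C L) {z : F} (hz : z ∈ C) :
    d z + L / 2 * ‖T z - z‖ ^ 2 ≤ d (T z) := by
  have := h z hz z hz
  rw [sub_self, norm_zero, norm_sub_rev] at this
  linarith

theorem le_apply (h : ThreePointIneq d T C L) (hL : 0 ≤ L) {z : F} (hz : z ∈ C) :
    d z ≤ d (T z) := by
  nlinarith [h.add_sq_le hz, sq_nonneg ‖T z - z‖]

theorem sub_le_mul (h : ThreePointIneq d T C L) (hL : 0 ≤ L) {z y : F} (hz : z ∈ C)
    (hy : y ∈ C) {κ : ℝ} (heb : ‖z - y‖ ≤ κ * ‖T z - z‖) :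
    d y - d (T z) ≤ κ ^ 2 / (1 + κ ^ 2) * (d y - d z) := by
  have hsq : ‖z - y‖ ^ 2 ≤ κ ^ 2 * ‖T z - z‖ ^ 2 := by
    rw [← mul_pow]; exact pow_le_pow_left₀ (norm_nonneg _) heb 2
  have htp := h z hz y hy
  have hasc := h.add_sq_le hz
  rw [norm_sub_rev y z] at htp
  rw [div_mul_eq_mul_div, le_div_iff₀ (by positivity)]
  nlinarith [sq_nonneg ‖y - T z‖, sq_nonneg κ]

theorem norm_apply_sub_le (h : ThreePointIneq d T C L) (hL : 0 < L) {z y : F} (hz : z ∈ C)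
    (hy : y ∈ C) (hdy : d (T z) ≤ d y) : ‖T z - y‖ ≤ ‖z - y‖ := by
  have htp := h z hz y hy
  rw [norm_sub_rev y, norm_sub_rev y] at htp
  refine (sq_le_sq₀ (norm_nonneg _) (norm_nonneg _)).1 ?_
  nlinarith

theorem sub_le_mul_pow (h : ThreePointIneq d T C L) (hL : 0 ≤ L) {x : ℕ → F}
    (hxC : ∀ k, x k ∈ C) (hx : ∀ k, x (k + 1) = T (x k)) {dstar κ : ℝ} {y₀ : F} (hy₀ : y₀ ∈ C)
    (hdy₀ : d y₀ = dstar)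
    (heb : ∀ z ∈ C, d (x 0) ≤ d z → ∃ y ∈ C, d y = dstar ∧ ‖z - y‖ ≤ κ * ‖T z - z‖) (m : ℕ) :
    dstar - d (x (m + 1)) ≤ L / 2 * ‖x 0 - y₀‖ ^ 2 * (κ ^ 2 / (1 + κ ^ 2)) ^ m := by
  have hmono : ∀ k, d (x 0) ≤ d (x k) := by
    intro k
    induction k with
    | zero => exact le_rfl
    | succ k ih => exact ih.trans (hx k ▸ h.le_apply hL (hxC k))
  induction m with
  | zero =>
    have := h (x 0) (hxC 0) y₀ hy₀
    rw [← hx, hdy₀, norm_sub_rev] at this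
    nlinarith [sq_nonneg ‖y₀ - x (0 + 1)‖]
  | succ m ih =>
    obtain ⟨y, hy, hdy, hyeb⟩ := heb _ (hxC (m + 1)) (hmono _)
    have hcontr := h.sub_le_mul hL (hxC _) hy hyeb
    rw [← hx, hdy] at hcontr
    calc dstar - d (x (m + 1 + 1)) ≤ κ ^ 2 / (1 + κ ^ 2) * (dstar - d (x (m + 1))) := hcontr
      _ ≤ κ ^ 2 / (1 + κ ^ 2) * (L / 2 * ‖x 0 - y₀‖ ^ 2 * (κ ^ 2 / (1 + κ ^ 2)) ^ m) := by
        gcongr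
      _ = L / 2 * ‖x 0 - y₀‖ ^ 2 * (κ ^ 2 / (1 + κ ^ 2)) ^ (m + 1) := by ring

theorem norm_sub_le_of_forall_le (h : ThreePointIneq d T C L) (hL : 0 < L) {x : ℕ → F}
    (hxC : ∀ k, x k ∈ C) (hx : ∀ k, x (k + 1) = T (x k)) {y : F} (hy : y ∈ C)
    (hdy : ∀ k, d (x k) ≤ d y) (k : ℕ) : ‖x k - y‖ ≤ ‖x 0 - y‖ := by
  induction k with
  | zero => exact le_rfl
  | succ k ih => exact (hx k ▸ h.norm_apply_sub_le hL (hxC k) hy (hx k ▸ hdy (k + 1))).trans ih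

theorem max_norm_le_of_forall_le (h : ThreePointIneq d T C L) (hL : 0 < L) {x : ℕ → F}
    (hxC : ∀ k, x k ∈ C) (hx : ∀ k, x (k + 1) = T (x k)) {y : F} (hy : y ∈ C)
    (hdy : ∀ k, d (x k) ≤ d y) (k : ℕ) : max ‖x k‖ ‖y‖ ≤ 2 * ‖x 0 - y‖ + ‖x 0‖ := by
  have hfej := h.norm_sub_le_of_forall_le hL hxC hx hy hdy k
  have hxk := norm_le_insert' (x k) (x 0)
  have htri := norm_sub_le_norm_sub_add_norm_sub (x k) y (x 0)
  have hy0 := norm_le_insert' y (x 0)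
  rw [norm_sub_rev y] at htri hy0
  exact max_le (by linarith) (by linarith [norm_nonneg (x 0 - y)])

theorem norm_apply_sub_le_of_sub_le (h : ThreePointIneq d T C L) (hL : 0 < L) {z : F}
    (hz : z ∈ C) {dstar r : ℝ} (hTz : d (T z) ≤ dstar) (hr : 0 ≤ r)
    (hgap : dstar - d z ≤ L / 2 * r ^ 2) : ‖T z - z‖ ≤ r := by
  have := h.add_sq_le hz
  refine (sq_le_sq₀ (norm_nonneg _) hr).1 ?_
  nlinarith

end ThreePointIneq

end ThreePoint

section ProjectedGradientStep

variable {F : Type*} [NormedAddCommGroup F] [InnerProductSpace ℝ F]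

theorem ThreePointIneq.of_projStep {d : F → ℝ} {D P : F → F} {C : Set F} (hC : Convex ℝ C)
    {L : ℝ} (hL : 0 < L) (hP : ∀ z, P z ∈ C ∧ ∀ w ∈ C, ‖z - P z‖ ≤ ‖z - w‖)
    (hsup : ∀ x y, d y ≤ d x + ⟪D x, y - x⟫)
    (hlow : ∀ x y, d x + ⟪D x, y - x⟫ - L / 2 * ‖y - x‖ ^ 2 ≤ d y) :
    ThreePointIneq d (fun z => P (z + (1 / L) • D z)) C L := by
  intro x _ y hy
  obtain ⟨hpC, hpmin⟩ := hP (x + (1 / L) • D x)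
  set p := P (x + (1 / L) • D x)
  have hstep : ⟪D x, y - p⟫ ≤ L * ⟪p - x, y - p⟫ := by
    have h := inner_sub_le_zero_of_forall_norm_sub_le hC hpC hpmin hy
    rw [show x + (1 / L) • D x - p = (1 / L) • D x - (p - x) by abel, inner_sub_left,
      real_inner_smul_left, sub_nonpos, one_div, inv_mul_le_iff₀ hL] at h
    exact h
  have hsplit : y - x = (y - p) + (p - x) := by abel
  have hy' := hsup x y
  have hp := hlow x p
  rw [hsplit, inner_add_right] at hy'
  rw [hsplit, norm_add_sq_real, real_inner_comm]
  nlinarith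

end ProjectedGradientStep

section LagrangianDuality

variable {E F : Type*} [NormedAddCommGroup E] [InnerProductSpace ℝ E] [NormedAddCommGroup F]
  [InnerProductSpace ℝ F]

def lagrangian (f : E → ℝ) (G : E →L[ℝ] F) (g : F) (u : E) (x : F) : ℝ :=
  f u + ⟪x, -(G u) - g⟫

def IsLagrangianArgmin (f : E → ℝ) (G : E →L[ℝ] F) (g : F) (U : Set E) (uu : F → E) : Prop :=
  ∀ x, uu x ∈ U ∧ ∀ u ∈ U, lagrangian f G g (uu x) x ≤ lagrangian f G g u x

def dualFunction (f : E → ℝ) (G : E →L[ℝ] F) (g : F) (uu : F → E) (x : F) : ℝ :=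
  lagrangian f G g (uu x) x

theorem inner_map_sub_map_le (G : E →L[ℝ] F) (x : F) (a b : E) :
    ⟪x, G a - G b⟫ ≤ ‖x‖ * (‖G‖ * ‖a - b‖) := by
  refine (real_inner_le_norm _ _).trans (mul_le_mul_of_nonneg_left ?_ (norm_nonneg _))
  rw [← map_sub]
  exact G.le_opNorm _

variable {f : E → ℝ} {G : E →L[ℝ] F} {g : F} {U : Set E} {uu : F → E} {σ : ℝ}

theorem strongConvexOn_lagrangian (hf : StrongConvexOn univ σ f) (x : F) :
    StrongConvexOn univ σ (lagrangian f G g · x) := by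
  have haff : ConvexOn ℝ univ fun u => ⟪x, -(G u) - g⟫ := by
    refine ⟨convex_univ, fun u _ v _ a b _ _ hab => le_of_eq ?_⟩
    simp only [map_add, map_smul, inner_sub_right, inner_neg_right, inner_add_right,
      real_inner_smul_right, smul_eq_mul]
    linear_combination ⟪x, g⟫ * hab
  have h := hf.add (uniformConvexOn_zero.2 haff)
  rw [add_zero] at h
  exact h

theorem dualFunction_add_sq_le (hf : StrongConvexOn univ σ f) (hU : Convex ℝ U)
    (huu : IsLagrangianArgmin f G g U uu) (x : F) {w : E} (hw : w ∈ U) :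
    dualFunction f G g uu x + σ / 2 * ‖w - uu x‖ ^ 2 ≤ lagrangian f G g w x :=
  ((strongConvexOn_lagrangian hf x).subset (subset_univ U) hU).add_sq_le_of_isMinOn (huu x).1
    (isMinOn_iff.2 (huu x).2) hw

theorem dualFunction_le_add_inner (huu : IsLagrangianArgmin f G g U uu) (x y : F) :
    dualFunction f G g uu y ≤ dualFunction f G g uu x + ⟪-(G (uu x)) - g, y - x⟫ := by
  have h := (huu y).2 _ (huu x).1
  have hsplit : ⟪y, -(G (uu x)) - g⟫ = ⟪x, -(G (uu x)) - g⟫ + ⟪-(G (uu x)) - g, y - x⟫ := by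
    rw [inner_sub_right (-(G (uu x)) - g) y x, real_inner_comm (-(G (uu x)) - g) y,
      real_inner_comm (-(G (uu x)) - g) x]
    ring
  simp only [dualFunction, lagrangian] at h ⊢
  linarith

theorem add_inner_sub_le_dualFunction (hσ : 0 < σ) (hf : StrongConvexOn univ σ f)
    (hU : Convex ℝ U) (huu : IsLagrangianArgmin f G g U uu) {L : ℝ} (hL : ‖G‖ ^ 2 / σ ≤ L)
    (x y : F) :
    dualFunction f G g uu x + ⟪-(G (uu x)) - g, y - x⟫ - L / 2 * ‖y - x‖ ^ 2 ≤
      dualFunction f G g uu y := by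
  have hgrowth := dualFunction_add_sq_le hf hU huu x (huu y).1
  have hcs := inner_map_sub_map_le G (y - x) (uu y) (uu x)
  have hL' : ‖G‖ ^ 2 ≤ L * σ := (div_le_iff₀ hσ).1 hL
  simp only [dualFunction, lagrangian] at hgrowth ⊢
  have hsplit : ⟪y, -(G (uu y)) - g⟫ = ⟪x, -(G (uu y)) - g⟫ + ⟪-(G (uu x)) - g, y - x⟫ -
      ⟪y - x, G (uu y) - G (uu x)⟫ := by
    simp only [inner_sub_left, inner_sub_right, inner_neg_right, inner_neg_left, real_inner_comm]
    ring
  rw [hsplit]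
  -- Young: `‖G‖ a b ≤ σ / 2 * b ^ 2 + ‖G‖ ^ 2 / (2 σ) * a ^ 2`
  nlinarith [sq_nonneg (σ * ‖uu y - uu x‖ - ‖G‖ * ‖y - x‖), sq_nonneg ‖y - x‖]

theorem apply_sub_le_norm_mul (huu : IsLagrangianArgmin f G g U uu) (x : F) {u : E}
    (hu : u ∈ U) : f (uu x) - f u ≤ ‖x‖ * (‖G‖ * ‖uu x - u‖) := by
  have h := (huu x).2 u hu
  have hcs := inner_map_sub_map_le G x (uu x) u
  simp only [lagrangian, inner_sub_right, inner_neg_right] at h hcs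
  linarith

variable [CompleteSpace F] {C : ProperCone ℝ F}

theorem lagrangian_le_of_mem {x : F} (hx : x ∈ ProperCone.innerDual (C : Set F)) {u : E}
    (hu : G u + g ∈ C) : lagrangian f G g u x ≤ f u := by
  have := ProperCone.mem_innerDual.1 hx hu
  rw [lagrangian, ← neg_add', inner_neg_right, real_inner_comm]
  linarith

theorem dualFunction_le (huu : IsLagrangianArgmin f G g U uu) {x : F}
    (hx : x ∈ ProperCone.innerDual (C : Set F)) {u : E} (hu : u ∈ U) (hfeas : G u + g ∈ C) :
    dualFunction f G g uu x ≤ f u :=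
  ((huu x).2 u hu).trans (lagrangian_le_of_mem hx hfeas)

theorem sq_norm_sub_le_sub_dualFunction (hf : StrongConvexOn univ σ f) (hU : Convex ℝ U)
    (huu : IsLagrangianArgmin f G g U uu) {x : F} (hx : x ∈ ProperCone.innerDual (C : Set F))
    {u : E} (hu : u ∈ U) (hfeas : G u + g ∈ C) :
    σ / 2 * ‖uu x - u‖ ^ 2 ≤ f u - dualFunction f G g uu x := by
  have := (dualFunction_add_sq_le hf hU huu x hu).trans (lagrangian_le_of_mem hx hfeas)
  rw [norm_sub_rev]
  linarith

theorem dualFunction_sub_le_norm_mul_infDist (huu : IsLagrangianArgmin f G g U uu) {y : F}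
    (hy : y ∈ ProperCone.innerDual (C : Set F)) (x : F) :
    dualFunction f G g uu y - f (uu x) ≤ ‖y‖ * Metric.infDist (G (uu x) + g) C := by
  have h := (huu y).2 _ (huu x).1
  have hinf := C.neg_inner_le_norm_mul_infDist hy (G (uu x) + g)
  rw [← inner_neg_right, neg_add'] at hinf
  simp only [dualFunction, lagrangian] at h ⊢
  linarith

theorem infDist_le_mul_norm_sub {L : ℝ} (hL : 0 < L) (x : F) {p : F}
    (hp : p ∈ ProperCone.innerDual (C : Set F))
    (hmin : ∀ w ∈ ProperCone.innerDual (C : Set F),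
      ‖x + (1 / L) • (-(G (uu x)) - g) - p‖ ≤ ‖x + (1 / L) • (-(G (uu x)) - g) - w‖) :
    Metric.infDist (G (uu x) + g) C ≤ L * ‖x - p‖ := by
  have hv := C.smul_mem (C.sub_mem_of_forall_norm_sub_le hp hmin) hL.le
  refine (Metric.infDist_le_dist_of_mem hv).trans_eq ?_
  have hres : G (uu x) + g - L • (p - (x + (1 / L) • (-(G (uu x)) - g))) = L • (x - p) := by
    rw [smul_sub, smul_add, smul_smul, mul_one_div_cancel hL.ne', one_smul, smul_sub]
    abel
  rw [dist_eq_norm, hres, norm_smul, Real.norm_of_nonneg hL.le]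

theorem abs_apply_sub_le_max_mul (huu : IsLagrangianArgmin f G g U uu) {u : E} (hu : u ∈ U)
    {y : F} (hy : y ∈ ProperCone.innerDual (C : Set F))
    (hdy : dualFunction f G g uu y = f u) (x : F) {a : ℝ}
    (hinf : Metric.infDist (G (uu x) + g) C ≤ a) (hGu : ‖G‖ * ‖uu x - u‖ ≤ a) :
    |f (uu x) - f u| ≤ max ‖x‖ ‖y‖ * a := by
  have ha : 0 ≤ a := Metric.infDist_nonneg.trans hinf
  have hlow := dualFunction_sub_le_norm_mul_infDist huu hy x
  have hup := apply_sub_le_norm_mul huu x hu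
  rw [hdy] at hlow
  rw [abs_le]
  constructor
  · nlinarith [mul_le_mul (le_max_right ‖x‖ ‖y‖) hinf Metric.infDist_nonneg (by positivity)]
  · nlinarith [mul_le_mul (le_max_left ‖x‖ ‖y‖) hGu (by positivity) (by positivity)]

theorem primal_estimates_of_dual_gap (hf : StrongConvexOn univ σ f) (hU : Convex ℝ U)
    (huu : IsLagrangianArgmin f G g U uu) {u : E} (hu : u ∈ U) (hfeas : G u + g ∈ C) {L : ℝ}
    (hL : 0 < L) (hGL : ‖G‖ ^ 2 = L * σ)
    {x p y : F} (hx : x ∈ ProperCone.innerDual (C : Set F))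
    (hp : p ∈ ProperCone.innerDual (C : Set F))
    (hmin : ∀ w ∈ ProperCone.innerDual (C : Set F),
      ‖x + (1 / L) • (-(G (uu x)) - g) - p‖ ≤ ‖x + (1 / L) • (-(G (uu x)) - g) - w‖)
    (hy : y ∈ ProperCone.innerDual (C : Set F)) (hdy : dualFunction f G g uu y = f u) {r B : ℝ}
    (hgap : f u - dualFunction f G g uu x ≤ L / 2 * r ^ 2) (hstep : ‖p - x‖ ≤ r)
    (hB : max ‖x‖ ‖y‖ ≤ B) :
    σ * ‖uu x - u‖ ^ 2 ≤ L * r ^ 2 ∧ Metric.infDist (G (uu x) + g) C ≤ L * r ∧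
      |f (uu x) - f u| ≤ B * (L * r) := by
  have hr : 0 ≤ r := (norm_nonneg _).trans hstep
  have hdist := sq_norm_sub_le_sub_dualFunction hf hU huu hx hu hfeas
  have hinf : Metric.infDist (G (uu x) + g) C ≤ L * r := by
    refine (infDist_le_mul_norm_sub hL x hp hmin).trans ?_
    rw [norm_sub_rev]
    gcongr
  have hGu : ‖G‖ * ‖uu x - u‖ ≤ L * r := by
    refine (sq_le_sq₀ (by positivity) (by positivity)).1 ?_
    rw [mul_pow, hGL]
    nlinarith
  refine ⟨by linarith, hinf, (abs_apply_sub_le_max_mul huu hu hy hdy x hinf hGu).trans ?_⟩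
  gcongr

end LagrangianDuality

theorem rpow_natCast_sub_one_div_two_sq {θ : ℝ} (hθ : 0 ≤ θ) (m : ℕ) :
    (θ ^ ((((m + 1 : ℕ) : ℝ) - 1) / 2)) ^ 2 = θ ^ m := by
  rw [← Real.rpow_natCast, ← Real.rpow_mul hθ, ← Real.rpow_natCast]
  push_cast
  ring_nf

theorem stmt_15_general {n p : ℕ}
    (f : EuclideanSpace ℝ (Fin n) → ℝ) (σf : ℝ) (hσf : 0 < σf)
    (hfsc : StrongConvexOn Set.univ σf f)
    (U : Set (EuclideanSpace ℝ (Fin n))) (hUcv : Convex ℝ U)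
    (G : EuclideanSpace ℝ (Fin n) →L[ℝ] EuclideanSpace ℝ (Fin p)) (hG : G ≠ 0) (g : EuclideanSpace ℝ (Fin p))
    (K : Set (EuclideanSpace ℝ (Fin p))) (hKne : K.Nonempty) (hKcl : IsClosed K) (hKcv : Convex ℝ K)
    (hKcone : ∀ c : ℝ, 0 ≤ c → ∀ v ∈ K, c • v ∈ K)
    (Kstar : Set (EuclideanSpace ℝ (Fin p)))
    (hKstar : Kstar = {x : EuclideanSpace ℝ (Fin p) | ∀ v ∈ K, 0 ≤ ⟪x, v⟫})
    (Lag : EuclideanSpace ℝ (Fin n) → EuclideanSpace ℝ (Fin p) → ℝ)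
    (hLag : ∀ u x, Lag u x = f u + ⟪x, -(G u) - g⟫)
    (uu : EuclideanSpace ℝ (Fin p) → EuclideanSpace ℝ (Fin n))
    (huu : ∀ x : EuclideanSpace ℝ (Fin p), uu x ∈ U ∧ ∀ u ∈ U, Lag (uu x) x ≤ Lag u x)
    (d : EuclideanSpace ℝ (Fin p) → ℝ) (hd : ∀ x, d x = Lag (uu x) x)
    (ustar : EuclideanSpace ℝ (Fin n))
    (hustar : ustar ∈ U ∧ G ustar + g ∈ K ∧ ∀ u ∈ U, G u + g ∈ K → f ustar ≤ f u)
    (fstar : ℝ) (hfstar : fstar = f ustar)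
    (Xstar : Set (EuclideanSpace ℝ (Fin p))) (hXstar : Xstar = {x ∈ Kstar | d x = fstar})
    (Ld : ℝ) (hLd : Ld = ‖G‖ ^ 2 / σf)
    (projKs : EuclideanSpace ℝ (Fin p) → EuclideanSpace ℝ (Fin p))
    (hprojKs : ∀ z : EuclideanSpace ℝ (Fin p), projKs z ∈ Kstar ∧ ∀ w ∈ Kstar, ‖z - projKs z‖ ≤ ‖z - w‖)
    (gmap : EuclideanSpace ℝ (Fin p) → EuclideanSpace ℝ (Fin p))
    (hgmap : ∀ z : EuclideanSpace ℝ (Fin p), gmap z = projKs (z + (1 / Ld) • (-(G (uu z)) - g)) - z)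
    (projX : EuclideanSpace ℝ (Fin p) → EuclideanSpace ℝ (Fin p))
    (hprojX : ∀ z : EuclideanSpace ℝ (Fin p), projX z ∈ Xstar ∧ ∀ w ∈ Xstar, ‖z - projX z‖ ≤ ‖z - w‖)
    (x : ℕ → EuclideanSpace ℝ (Fin p)) (hx0K : x 0 ∈ Kstar)
    (hxrec : ∀ k, x (k + 1) = projKs (x k + (1 / Ld) • (-(G (uu (x k))) - g)))
    (κ : ℝ)
    (hEB : ∀ z ∈ Kstar, fstar - d z ≤ fstar - d (x 0) →
      ‖z - projX z‖ ≤ κ * ‖gmap z‖)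
    (Rd : ℝ) (hRd : Rd = ‖x 0 - projX (x 0)‖)
    (θ : ℝ) (hθ : θ = κ ^ 2 / (1 + κ ^ 2)) :
    ∀ k : ℕ, 1 ≤ k →
      ‖uu (x k) - ustar‖ ≤
        Real.sqrt (Ld * Rd ^ 2 / σf) * θ ^ (((k : ℝ) - 1) / 2) ∧
      Metric.infDist (G (uu (x k)) + g) K ≤ Ld * Rd * θ ^ (((k : ℝ) - 1) / 2) ∧
      |f (uu (x k)) - fstar| ≤
        (2 * Rd + ‖x 0‖) * (Ld * Rd) * θ ^ (((k : ℝ) - 1) / 2) := by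
  obtain ⟨C, rfl⟩ := exists_properCone_coe_eq hKne hKcl hKcv hKcone
  obtain rfl : Kstar = ProperCone.innerDual (C : Set (EuclideanSpace ℝ (Fin p))) :=
    hKstar.trans (by ext; simp [real_inner_comm])
  obtain rfl : Lag = lagrangian f G g := funext₂ hLag
  obtain rfl : d = dualFunction f G g uu := funext hd
  subst hfstar hXstar
  have hL : 0 < Ld := hLd ▸ div_pos (pow_pos (norm_pos_iff.2 hG) 2) hσf
  have htp := ThreePointIneq.of_projStep (ProperCone.innerDual _).convex hL hprojKs
    (dualFunction_le_add_inner huu) (add_inner_sub_le_dualFunction hσf hfsc hUcv huu hLd.ge)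
  have hxC : ∀ k, x k ∈ ProperCone.innerDual (C : Set (EuclideanSpace ℝ (Fin p))) := by
    rintro (_ | k)
    exacts [hx0K, hxrec k ▸ (hprojKs _).1]
  have hweak k := dualFunction_le huu (hxC k) hustar.1 hustar.2.1
  obtain ⟨⟨hy₀C, hdy₀⟩, -⟩ := hprojX (x 0)
  have hgap := htp.sub_le_mul_pow hL.le hxC hxrec hy₀C hdy₀ fun z hz hdz =>
    ⟨projX z, (hprojX z).1.1, (hprojX z).1.2, hgmap z ▸ hEB z hz (sub_le_sub_left hdz _)⟩
  intro k hk
  obtain ⟨m, rfl⟩ := Nat.exists_eq_add_of_le' hk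
  have hθ0 : 0 ≤ θ := hθ ▸ by positivity
  set s := θ ^ ((((m + 1 : ℕ) : ℝ) - 1) / 2)
  have hRs : 0 ≤ Rd * s := mul_nonneg (hRd ▸ norm_nonneg _) (Real.rpow_nonneg hθ0 _)
  replace hgap : f ustar - dualFunction f G g uu (x (m + 1)) ≤ Ld / 2 * (Rd * s) ^ 2 := by
    rw [mul_pow, rpow_natCast_sub_one_div_two_sq hθ0, hRd, hθ, ← mul_assoc]
    exact hgap m
  have hstep := htp.norm_apply_sub_le_of_sub_le hL (hxC (m + 1))
    (hxrec (m + 1) ▸ hweak (m + 1 + 1)) hRs hgap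
  have hnorm := htp.max_norm_le_of_forall_le hL hxC hxrec hy₀C (fun k => hdy₀ ▸ hweak k) (m + 1)
  obtain ⟨hdist, hinf, hval⟩ := primal_estimates_of_dual_gap hfsc hUcv huu hustar.1
    hustar.2.1 hL (by rw [hLd, div_mul_cancel₀ _ hσf.ne']) (hxC (m + 1)) (hprojKs _).1
    (hprojKs _).2 hy₀C hdy₀ hgap hstep (hRd ▸ hnorm)
  refine ⟨(sq_le_sq₀ (norm_nonneg _) (by positivity)).1 ?_, by rwa [← mul_assoc] at hinf,
    by rwa [← mul_assoc, ← mul_assoc, mul_assoc _ Ld] at hval⟩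
  rw [mul_pow, Real.sq_sqrt (by positivity), div_mul_eq_mul_div, le_div_iff₀ hσf]
  linarith [mul_pow Rd s 2]

theorem stmt_15 {n p : ℕ}
    (f : EuclideanSpace ℝ (Fin n) → ℝ) (σf : ℝ) (hσf : 0 < σf)
    (hfc : Continuous f) (hfsc : StrongConvexOn Set.univ σf f)
    (U : Set (EuclideanSpace ℝ (Fin n))) (hUne : U.Nonempty) (hUcl : IsClosed U) (hUcv : Convex ℝ U)
    (G : EuclideanSpace ℝ (Fin n) →L[ℝ] EuclideanSpace ℝ (Fin p)) (hG : G ≠ 0) (g : EuclideanSpace ℝ (Fin p))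
    (K : Set (EuclideanSpace ℝ (Fin p))) (hKne : K.Nonempty) (hKcl : IsClosed K) (hKcv : Convex ℝ K)
    (hKcone : ∀ c : ℝ, 0 ≤ c → ∀ v ∈ K, c • v ∈ K)
    (Kstar : Set (EuclideanSpace ℝ (Fin p)))
    (hKstar : Kstar = {x : EuclideanSpace ℝ (Fin p) | ∀ v ∈ K, 0 ≤ ⟪x, v⟫})
    (Lag : EuclideanSpace ℝ (Fin n) → EuclideanSpace ℝ (Fin p) → ℝ)
    (hLag : ∀ u x, Lag u x = f u + ⟪x, -(G u) - g⟫)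
    (uu : EuclideanSpace ℝ (Fin p) → EuclideanSpace ℝ (Fin n))
    (huu : ∀ x : EuclideanSpace ℝ (Fin p), uu x ∈ U ∧ ∀ u ∈ U, Lag (uu x) x ≤ Lag u x)
    (d : EuclideanSpace ℝ (Fin p) → ℝ) (hd : ∀ x, d x = Lag (uu x) x)
    (ustar : EuclideanSpace ℝ (Fin n))
    (hustar : ustar ∈ U ∧ G ustar + g ∈ K ∧ ∀ u ∈ U, G u + g ∈ K → f ustar ≤ f u)
    (fstar : ℝ) (hfstar : fstar = f ustar)
    (Xstar : Set (EuclideanSpace ℝ (Fin p))) (hXstar : Xstar = {x ∈ Kstar | d x = fstar})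
    (hXne : Xstar.Nonempty)
    (Ld : ℝ) (hLd : Ld = ‖G‖ ^ 2 / σf)
    (projKs : EuclideanSpace ℝ (Fin p) → EuclideanSpace ℝ (Fin p))
    (hprojKs : ∀ z : EuclideanSpace ℝ (Fin p), projKs z ∈ Kstar ∧ ∀ w ∈ Kstar, ‖z - projKs z‖ ≤ ‖z - w‖)
    (gmap : EuclideanSpace ℝ (Fin p) → EuclideanSpace ℝ (Fin p))
    (hgmap : ∀ z : EuclideanSpace ℝ (Fin p), gmap z = projKs (z + (1 / Ld) • (-(G (uu z)) - g)) - z)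
    (projX : EuclideanSpace ℝ (Fin p) → EuclideanSpace ℝ (Fin p))
    (hprojX : ∀ z : EuclideanSpace ℝ (Fin p), projX z ∈ Xstar ∧ ∀ w ∈ Xstar, ‖z - projX z‖ ≤ ‖z - w‖)
    (x : ℕ → EuclideanSpace ℝ (Fin p)) (hx0K : x 0 ∈ Kstar)
    (hxrec : ∀ k, x (k + 1) = projKs (x k + (1 / Ld) • (-(G (uu (x k))) - g)))
    (κ : ℝ) (hκ : 0 < κ) (hMpos : 0 < fstar - d (x 0))
    (hEB : ∀ z ∈ Kstar, fstar - d z ≤ fstar - d (x 0) →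
      ‖z - projX z‖ ≤ κ * ‖gmap z‖)
    (Rd : ℝ) (hRd : Rd = ‖x 0 - projX (x 0)‖)
    (θ : ℝ) (hθ : θ = κ ^ 2 / (1 + κ ^ 2)) :
    ∀ k : ℕ, 1 ≤ k →
      ‖uu (x k) - ustar‖ ≤
        Real.sqrt (Ld * Rd ^ 2 / σf) * θ ^ (((k : ℝ) - 1) / 2) ∧
      Metric.infDist (G (uu (x k)) + g) K ≤ Ld * Rd * θ ^ (((k : ℝ) - 1) / 2) ∧
      |f (uu (x k)) - fstar| ≤
        (2 * Rd + ‖x 0‖) * (Ld * Rd) * θ ^ (((k : ℝ) - 1) / 2) :=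
  stmt_15_general f σf hσf hfsc U hUcv G hG g K hKne hKcl hKcv hKcone Kstar hKstar Lag hLag uu huu d
    hd ustar hustar fstar hfstar Xstar hXstar Ld hLd projKs hprojKs gmap hgmap projX hprojX x hx0K
    hxrec κ hEB Rd hRd θ hθ
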